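/- Let (R, m) be a Noetherian local ring of positive characteristic and let I = (x₁,…,x_d) be a parameter ideal. Suppose a closure operation c with colon-capturing satisfies λ(R/c(I^{[q]})) = q^d · λ(R/c(I)) for all q = p^e. Then c(I) = I + c(I^{[q]}) for every q = p^e. -/

import Mathlib

open IsLocalRing Filter

set_option linter.unusedVariables false

/-- The length of an `R`-module `M`, defined as the Krull dimension of its submodule
lattice (valued in `ℕ∞`; the lattice is never empty so `unbot'` is harmless). -/
noncomputable def mLength (R M : Type*) [Ring R] [AddCommGroup M] [Module R M] : ℕ∞ :=
  WithBot.unbotD 0 (Order.krullDim (Submodule R M))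

/-- The length `λ(B/A)` of the subquotient of two ideals `A ≤ B`. -/
noncomputable def qLength (R : Type*) [CommRing R] (A B : Ideal R) : ℕ∞ :=
  mLength R (↥B ⧸ (Submodule.comap B.subtype A))

/-- The ideal `(x₁^{k₁}, …, x_d^{k_d})`. -/
def spow {R : Type*} [CommRing R] {d : ℕ} (x : Fin d → R) (k : Fin d → ℕ) : Ideal R :=
  Ideal.span (Set.range fun i => x i ^ k i)

/-- `x₁, …, x_d` is a system of parameters: `d = dim R` and the ideal it generates is
`m`-primary (radical equal to the maximal ideal). -/
def IsSOP (R : Type*) [CommRing R] [IsLocalRing R] {d : ℕ} (x : Fin d → R) : Prop :=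
  ringKrullDim R = d ∧ (Ideal.span (Set.range x)).radical = maximalIdeal R

/-- A parameter ideal: an ideal generated by a full system of parameters. -/
def IsParameterIdeal (R : Type*) [CommRing R] [IsLocalRing R] (I : Ideal R) : Prop :=
  ∃ (d : ℕ) (x : Fin d → R), IsSOP R x ∧ I = Ideal.span (Set.range x)

/-- The Frobenius power `I^{[q]}`, generated by `q`-th powers of elements of `I`. -/
def frobPow {R : Type*} [CommRing R] (q : ℕ) (I : Ideal R) : Ideal R :=
  Ideal.span ((fun a => a ^ q) '' (I : Set R))

/-- Tight closure of an ideal in a ring of characteristic `p`. -/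
def tightClosure {R : Type*} [CommRing R] (p : ℕ) (I : Ideal R) : Set R :=
  {x | ∃ c : R, (∀ P ∈ minimalPrimes R, c ∉ P) ∧
    ∃ N : ℕ, ∀ e ≥ N, c * x ^ p ^ e ∈ frobPow (p ^ e) I}

/-- A test element: an element of `R°` multiplying the tight closure of every ideal
back into the ideal. -/
def IsTestElement {R : Type*} [CommRing R] (p : ℕ) (c : R) : Prop :=
  (∀ P ∈ minimalPrimes R, c ∉ P) ∧ ∀ I : Ideal R, ∀ x ∈ tightClosure p I, c * x ∈ I


/-- Auxiliary exponent pattern: the first `i` exponents are `q`, the rest are `1`. -/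
def kfun (q d : ℕ) (i : ℕ) : Fin d → ℕ := fun j => if (j : ℕ) < i then q else 1

section LengthTheory

variable {R M N : Type*} [Ring R] [AddCommGroup M] [Module R M] [AddCommGroup N] [Module R N]

lemma mLength_eq_iSup' (R M : Type*) [Ring R] [AddCommGroup M] [Module R M] :
    mLength R M = ⨆ p : LTSeries (Submodule R M), (p.length : ℕ∞) := by
  rw [mLength, Order.krullDim_eq_iSup_length, WithBot.unbotD_coe]

lemma length_le_mLength (p : LTSeries (Submodule R M)) :
    (p.length : ℕ∞) ≤ mLength R M := by
  rw [mLength_eq_iSup']; exact le_iSup (fun p : LTSeries (Submodule R M) => (p.length : ℕ∞)) p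

lemma mLength_congr' (e : M ≃ₗ[R] N) : mLength R M = mLength R N := by
  unfold mLength
  rw [Order.krullDim_eq_of_orderIso (Submodule.orderIsoMapComap e)]

lemma RelSeries.length_snoc' {γ : Type*} {r : SetRel γ γ} (s : RelSeries r) (a : γ)
    (h : (s.last, a) ∈ r) : (s.snoc a h).length = s.length + 1 := by
  simp [RelSeries.snoc_length]

lemma exists_prod_series {α β : Type*} [PartialOrder α] [PartialOrder β]
    (p : LTSeries (α × β)) :
    ∃ (q : LTSeries α) (r : LTSeries β), q.last = p.last.1 ∧ r.last = p.last.2 ∧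
      p.length ≤ q.length + r.length := by
  suffices H : ∀ (n : ℕ) (p : LTSeries (α × β)), p.length = n → ∃ (q : LTSeries α) (r : LTSeries β),
      q.last = p.last.1 ∧ r.last = p.last.2 ∧ p.length ≤ q.length + r.length from H p.length p rfl
  intro n
  induction n with
  | zero =>
    intro p hn
    exact ⟨RelSeries.singleton _ p.last.1, RelSeries.singleton _ p.last.2, rfl, rfl, by simp [hn]⟩
  | succ n ih =>
    intro p hn
    have hne : p.length ≠ 0 := by omega
    have hlen' : p.eraseLast.length = n := by
      simp only [RelSeries.eraseLast_length]; omega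
    obtain ⟨q, r, hq, hr, hlen⟩ := ih p.eraseLast hlen'
    have hstep : p.eraseLast.last < p.last := p.eraseLast_last_rel_last hne
    rcases Prod.lt_iff.mp hstep with ⟨h1, h2⟩ | ⟨h1, h2⟩
    · obtain ⟨r', hr'last, hr'len⟩ : ∃ r' : LTSeries β,
          r'.last = p.last.2 ∧ r.length ≤ r'.length := by
        rcases eq_or_lt_of_le (hr ▸ h2) with h | h
        · exact ⟨r, h, le_rfl⟩
        · exact ⟨r.snoc p.last.2 h, RelSeries.last_snoc _ _ _, by rw [RelSeries.length_snoc']; omega⟩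
      refine ⟨q.snoc p.last.1 (hq ▸ h1), r', RelSeries.last_snoc _ _ _, hr'last, ?_⟩
      rw [RelSeries.length_snoc']; omega
    · obtain ⟨q', hq'last, hq'len⟩ : ∃ q' : LTSeries α,
          q'.last = p.last.1 ∧ q.length ≤ q'.length := by
        rcases eq_or_lt_of_le (hq ▸ h1) with h | h
        · exact ⟨q, h, le_rfl⟩
        · exact ⟨q.snoc p.last.1 h, RelSeries.last_snoc _ _ _, by rw [RelSeries.length_snoc']; omega⟩
      refine ⟨q', r.snoc p.last.2 (hr ▸ h2), hq'last, RelSeries.last_snoc _ _ _, ?_⟩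
      rw [RelSeries.length_snoc']; omega

end LengthTheory

section Additivity

variable {R M : Type*} [Ring R] [AddCommGroup M] [Module R M]

private lemma pair_strictMono (N : Submodule R M) :
    StrictMono (fun c : Submodule R M => (c.comap N.subtype, c.map N.mkQ)) := by
  intro a b hab
  refine lt_of_le_of_ne ⟨Submodule.comap_mono hab.le, Submodule.map_mono hab.le⟩ ?_
  intro hEq
  have h1 : a.comap N.subtype = b.comap N.subtype := congrArg Prod.fst hEq
  have h2 : a.map N.mkQ = b.map N.mkQ := congrArg Prod.snd hEq
  refine absurd (le_antisymm hab.le ?_) hab.ne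
  intro z hz
  have : N.mkQ z ∈ a.map N.mkQ := h2 ▸ Submodule.mem_map_of_mem hz
  obtain ⟨y, hy, hyz⟩ := this
  have hzy : z - y ∈ N := by
    rw [← Submodule.ker_mkQ N, LinearMap.mem_ker, map_sub, hyz, sub_self]
  have hzyb : (⟨z - y, hzy⟩ : N) ∈ b.comap N.subtype := by
    simp only [Submodule.mem_comap, Submodule.subtype_apply]
    exact b.sub_mem hz (hab.le hy)
  rw [← h1] at hzyb
  have : z - y ∈ a := hzyb
  simpa using a.add_mem this hy

lemma mLength_le_add (N : Submodule R M) :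
    mLength R M ≤ mLength R N + mLength R (M ⧸ N) := by
  rw [mLength_eq_iSup' R M]
  apply iSup_le
  intro p
  obtain ⟨q, r, -, -, hlen⟩ := exists_prod_series (p.map _ (pair_strictMono N))
  calc (p.length : ℕ∞) = ((p.map _ (pair_strictMono N)).length : ℕ∞) := rfl
    _ ≤ (q.length : ℕ∞) + (r.length : ℕ∞) := by exact_mod_cast Nat.cast_le.mpr hlen
    _ ≤ mLength R N + mLength R (M ⧸ N) :=
        add_le_add (length_le_mLength q) (length_le_mLength r)

lemma mLength_add_le (N : Submodule R M) :
    mLength R N + mLength R (M ⧸ N) ≤ mLength R M := by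
  rw [mLength_eq_iSup' R N, mLength_eq_iSup' R (M ⧸ N)]
  rw [ENat.iSup_add]
  apply iSup_le
  intro q
  rw [ENat.add_iSup]
  apply iSup_le
  intro r
  set q' : LTSeries (Submodule R M) :=
    q.map (Submodule.map N.subtype) (Submodule.map_strictMono_of_injective N.injective_subtype)
    with hq'
  set r' : LTSeries (Submodule R M) :=
    r.map (Submodule.comap N.mkQ) (Submodule.comap_strictMono_of_surjective N.mkQ_surjective)
    with hr'
  have hq'N : q'.last ≤ N := Submodule.map_subtype_le N _
  have hNr' : N ≤ r'.head := by
    intro z hz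
    have : N.mkQ z = 0 := by
      rw [← LinearMap.mem_ker, Submodule.ker_mkQ]; exact hz
    show z ∈ Submodule.comap N.mkQ (r.head)
    simp only [Submodule.mem_comap, this]
    exact Submodule.zero_mem _
  rcases Nat.eq_zero_or_pos q.length with h0 | hpos
  · have : (q.length : ℕ∞) + r.length = (r'.length : ℕ∞) := by
      simp [hr', h0]
    rw [this]
    exact length_le_mLength r'
  · have hne : q'.length ≠ 0 := by show q.length ≠ 0; omega
    have hconn : q'.eraseLast.last < r'.head :=
      lt_of_lt_of_le (q'.eraseLast_last_rel_last hne) (le_trans hq'N hNr')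
    have hlen : (q'.eraseLast.append r' hconn).length = q.length + r.length := by
      rw [RelSeries.append_length]
      show q.length - 1 + r.length + 1 = _
      omega
    rw [← Nat.cast_add, ← hlen]
    exact length_le_mLength _

lemma mLength_add' (N : Submodule R M) :
    mLength R M = mLength R N + mLength R (M ⧸ N) :=
  le_antisymm (mLength_le_add N) (mLength_add_le N)

end Additivity

section Values

variable {R M : Type*} [Ring R] [AddCommGroup M] [Module R M]

lemma mLength_eq_zero_of_subsingleton [Subsingleton M] : mLength R M = 0 := by
  have h1 : Order.krullDim (Submodule R M) ≤ 0 := Order.krullDim_nonpos_of_subsingleton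
  have h2 : 0 ≤ Order.krullDim (Submodule R M) := Order.krullDim_nonneg
  rw [mLength, le_antisymm h1 h2]
  rfl

lemma one_le_mLength_of_nontrivial [Nontrivial M] : 1 ≤ mLength R M := by
  have hbt : (⊥ : Submodule R M) < ⊤ := bot_lt_top
  let p : LTSeries (Submodule R M) := (RelSeries.singleton _ ⊥).snoc ⊤ (by simpa using hbt)
  have h := length_le_mLength p
  rw [RelSeries.length_snoc'] at h
  simpa using h

lemma mLength_le_one_of_simple [IsSimpleModule R M] : mLength R M ≤ 1 := by
  rw [mLength_eq_iSup']
  apply iSup_le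
  intro p
  by_contra hcon
  push_neg at hcon
  have h2 : 2 ≤ p.length := by exact_mod_cast hcon
  have h01 : p ⟨0, by omega⟩ < p ⟨1, by omega⟩ := p.strictMono (by simp [Fin.lt_def])
  have h12 : p ⟨1, by omega⟩ < p ⟨2, by omega⟩ := p.strictMono (by simp [Fin.lt_def])
  rcases eq_bot_or_eq_top (p ⟨1, by omega⟩) with h | h
  · rw [h] at h01; exact not_lt_bot h01
  · rw [h] at h12; exact not_top_lt h12

lemma mLength_ne_top_of_isFiniteLength (h : IsFiniteLength R M) : mLength R M ≠ ⊤ := by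
  induction h with
  | of_subsingleton => rw [mLength_eq_zero_of_subsingleton]; simp
  | @of_simple_quotient M _ _ N _ h ih =>
    rw [mLength_add' N]
    exact WithTop.add_ne_top.mpr
      ⟨ih, ne_top_of_le_ne_top ENat.one_ne_top mLength_le_one_of_simple⟩

end Values

section IdealLayer

variable {R : Type*} [CommRing R]

lemma lenq_add {A B : Ideal R} (h : A ≤ B) :
    mLength R (R ⧸ A) = mLength R ↥(Submodule.map A.mkQ B) + mLength R (R ⧸ B) := by
  rw [mLength_add' (Submodule.map A.mkQ B),
    mLength_congr' (Submodule.quotientQuotientEquivQuotient A B h)]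

lemma lenq_mono {A B : Ideal R} (h : A ≤ B) :
    mLength R (R ⧸ B) ≤ mLength R (R ⧸ A) := by
  rw [lenq_add h]; exact le_add_self

lemma eq_of_lenq_le {A B : Ideal R} (h : A ≤ B)
    (hle : mLength R (R ⧸ A) ≤ mLength R (R ⧸ B))
    (hfin : mLength R (R ⧸ B) ≠ ⊤) : A = B := by
  by_contra hne
  have hnt : Nontrivial ↥(Submodule.map A.mkQ B) := by
    rw [Submodule.nontrivial_iff_ne_bot]
    intro hb
    refine hne (le_antisymm h ?_)
    intro z hz
    have hz' : A.mkQ z ∈ Submodule.map A.mkQ B := Submodule.mem_map_of_mem hz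
    rw [hb, Submodule.mem_bot] at hz'
    rwa [← Submodule.Quotient.mk_eq_zero A]
  have h1 := one_le_mLength_of_nontrivial (R := R) (M := ↥(Submodule.map A.mkQ B))
  rw [lenq_add h] at hle
  have h2 : mLength R (R ⧸ B) + 1 ≤ mLength R (R ⧸ B) := by
    calc mLength R (R ⧸ B) + 1 = 1 + mLength R (R ⧸ B) := add_comm _ _
      _ ≤ mLength R ↥(Submodule.map A.mkQ B) + mLength R (R ⧸ B) := add_le_add_left h1 _
      _ ≤ mLength R (R ⧸ B) := hle
  exact absurd ((ENat.add_one_le_iff hfin).mp h2) (lt_irrefl _)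

lemma lenq_colon_add (A : Ideal R) (b : R) :
    mLength R (R ⧸ A) =
      mLength R (R ⧸ (Submodule.colon A (Ideal.span {b})))
        + mLength R (R ⧸ (A ⊔ Ideal.span {b})) := by
  set f : R →ₗ[R] R ⧸ A := A.mkQ ∘ₗ LinearMap.toSpanSingleton R R b with hf
  have hker : LinearMap.ker f = Submodule.colon A (Ideal.span {b}) := by
    ext r
    rw [LinearMap.mem_ker, hf, LinearMap.comp_apply, LinearMap.toSpanSingleton_apply,
      ← Ideal.submodule_span_eq, Submodule.mem_colon_span_singleton]
    exact Submodule.Quotient.mk_eq_zero A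
  have hmapA : Submodule.map A.mkQ A = ⊥ := by
    refine le_antisymm ?_ bot_le
    rintro _ ⟨z, hz, rfl⟩
    simpa using (Submodule.Quotient.mk_eq_zero A).2 hz
  have hrange : LinearMap.range f = Submodule.map A.mkQ (A ⊔ Ideal.span {b}) := by
    rw [hf, LinearMap.range_comp, ← LinearMap.span_singleton_eq_range,
      Submodule.map_sup, hmapA, bot_sup_eq, Ideal.submodule_span_eq]
  rw [lenq_add (le_sup_left : A ≤ A ⊔ Ideal.span {b})]
  congr 1
  rw [← hrange, ← mLength_congr' f.quotKerEquivRange, hker]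

end IdealLayer

section Finiteness

variable {R : Type*} [CommRing R]

lemma mLength_ne_top_of_killed (M : Type*) [AddCommGroup M] [Module R M] [IsNoetherian R M]
    (m : Ideal R) (hm : m.IsMaximal) (hkill : ∀ r ∈ m, ∀ y : M, r • y = 0) :
    mLength R M ≠ ⊤ := by
  have hsimple : ∀ y : M, y ≠ 0 → IsSimpleModule R ↥(Submodule.span R {y}) := by
    intro y hy
    have hker : LinearMap.ker (LinearMap.toSpanSingleton R M y) = m := by
      refine (hm.eq_of_le ?_ ?_).symm
      · intro htop
        have : (1 : R) ∈ LinearMap.ker (LinearMap.toSpanSingleton R M y) := by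
          rw [htop]; trivial
        rw [LinearMap.mem_ker, LinearMap.toSpanSingleton_apply, one_smul] at this
        exact hy this
      · intro r hr
        rw [LinearMap.mem_ker, LinearMap.toSpanSingleton_apply]
        exact hkill r hr y
    have hqs : IsSimpleModule R (R ⧸ m) :=
      isSimpleModule_iff_isCoatom.mpr (Ideal.isMaximal_def.mp hm)
    rw [← hker] at hqs
    exact IsSimpleModule.congr
      ((LinearEquiv.ofEq _ _ (LinearMap.span_singleton_eq_range R M y)).trans
        (LinearMap.toSpanSingleton R M y).quotKerEquivRange.symm)
  have hsemi : IsSemisimpleModule R M := by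
    apply IsSemisimpleModule.of_sSup_simples_eq_top
    rw [eq_top_iff]
    intro y _
    by_cases hy : y = 0
    · simp [hy]
    · have hmem : Submodule.span R {y} ∈ {P : Submodule R M | IsSimpleModule R ↥P} :=
        hsimple y hy
      exact le_sSup hmem (Submodule.mem_span_singleton_self y)
  have hfin : Module.Finite R M := ⟨IsNoetherian.noetherian ⊤⟩
  have hart : IsArtinian R M := inferInstance
  exact mLength_ne_top_of_isFiniteLength
    (isFiniteLength_iff_isNoetherian_isArtinian.mpr ⟨inferInstance, hart⟩)

lemma lenq_pow_max_ne_top [IsNoetherianRing R] [IsLocalRing R] (n : ℕ) :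
    mLength R (R ⧸ (IsLocalRing.maximalIdeal R) ^ n) ≠ ⊤ := by
  induction n with
  | zero =>
    rw [pow_zero, Ideal.one_eq_top]
    have : Subsingleton (R ⧸ (⊤ : Ideal R)) :=
      Submodule.Quotient.subsingleton_iff.mpr rfl
    rw [mLength_eq_zero_of_subsingleton]
    simp
  | succ n ih =>
    set m := IsLocalRing.maximalIdeal R
    have hle : m ^ (n + 1) ≤ m ^ n := Ideal.pow_le_pow_right (by omega)
    rw [lenq_add hle]
    refine WithTop.add_ne_top.mpr ⟨?_, ih⟩
    apply mLength_ne_top_of_killed _ m (IsLocalRing.maximalIdeal.isMaximal R)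
    intro r hr y
    obtain ⟨yv, hyv⟩ := y
    obtain ⟨z, hz, rfl⟩ := hyv
    ext
    show r • (m ^ (n+1)).mkQ z = 0
    rw [← map_smul, smul_eq_mul]
    rw [Submodule.mkQ_apply, Submodule.Quotient.mk_eq_zero]
    have : r * z ∈ m * m ^ n := Ideal.mul_mem_mul hr hz
    rwa [← pow_succ'] at this

lemma lenq_ne_top_of_radical [IsNoetherianRing R] [IsLocalRing R]
    {A : Ideal R} (hA : IsLocalRing.maximalIdeal R ≤ A.radical) :
    mLength R (R ⧸ A) ≠ ⊤ := by
  obtain ⟨n, hn⟩ := Ideal.exists_pow_le_of_le_radical_of_fg hA (IsNoetherian.noetherian _)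
  exact ne_top_of_le_ne_top (lenq_pow_max_ne_top n) (lenq_mono hn)

end Finiteness

section ColonChain

variable {R : Type*} [CommRing R]

lemma chain_est (J C : Ideal R) (a : R) (q : ℕ)
    (hJC : J ≤ C) (haC : a ∈ C)
    (hcol : ∀ j, 1 ≤ j → j < q → Submodule.colon J (Ideal.span {a ^ j}) ≤ C) :
    ∀ t, t + 1 ≤ q →
      (t : ℕ∞) * mLength R (R ⧸ C) + mLength R (R ⧸ (J ⊔ Ideal.span {a}))
        ≤ mLength R (R ⧸ (J ⊔ Ideal.span {a ^ (t + 1)})) := by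
  intro t
  induction t with
  | zero => intro _; rw [pow_one]; simp
  | succ t ih =>
    intro ht1
    have hmaster := lenq_colon_add (J ⊔ Ideal.span {a ^ (t + 1 + 1)}) (a ^ (t + 1))
    have hsup : (J ⊔ Ideal.span {a ^ (t + 1 + 1)}) ⊔ Ideal.span {a ^ (t + 1)}
        = J ⊔ Ideal.span {a ^ (t + 1)} := by
      rw [sup_assoc]
      congr 1
      exact sup_eq_right.mpr (Ideal.span_singleton_le_span_singleton.mpr
        (pow_dvd_pow a (Nat.le_succ _)))
    have hcolbound :
        Submodule.colon (J ⊔ Ideal.span {a ^ (t + 1 + 1)}) (Ideal.span {a ^ (t + 1)}) ≤ C := by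
      intro r hr
      rw [Ideal.mem_colon_span_singleton, Submodule.mem_sup] at hr
      obtain ⟨u, hu, v, hv, huv⟩ := hr
      rw [Ideal.mem_span_singleton] at hv
      obtain ⟨s, rfl⟩ := hv
      have hmem : (r - a * s) * a ^ (t + 1) ∈ J := by
        have heq : (r - a * s) * a ^ (t + 1) = u := by
          linear_combination -huv
        rw [heq]; exact hu
      have hrC : r - a * s ∈ C := by
        refine hcol (t + 1) (by omega) (by omega) ?_
        rw [Ideal.mem_colon_span_singleton]
        exact hmem
      have haS : a * s ∈ C := Ideal.mul_mem_right s C haC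
      simpa using add_mem hrC haS
    rw [hsup] at hmaster
    calc ((t + 1 : ℕ) : ℕ∞) * mLength R (R ⧸ C) + mLength R (R ⧸ (J ⊔ Ideal.span {a}))
        = mLength R (R ⧸ C)
          + ((t : ℕ∞) * mLength R (R ⧸ C) + mLength R (R ⧸ (J ⊔ Ideal.span {a}))) := by
          push_cast; ring
      _ ≤ mLength R (R ⧸ C) + mLength R (R ⧸ (J ⊔ Ideal.span {a ^ (t + 1)})) :=
          add_le_add_right (ih (by omega)) _
      _ ≤ mLength R (R ⧸ Submodule.colon (J ⊔ Ideal.span {a ^ (t + 1 + 1)})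
            (Ideal.span {a ^ (t + 1)}))
          + mLength R (R ⧸ (J ⊔ Ideal.span {a ^ (t + 1)})) :=
          add_le_add_left (lenq_mono hcolbound) _
      _ = _ := hmaster.symm

lemma coord_est (J C : Ideal R) (a : R) (q : ℕ) (hq : 1 ≤ q) (hJC : J ≤ C) (haC : a ∈ C)
    (haq : a ^ q ∈ J)
    (hcol : ∀ j, 1 ≤ j → j < q → Submodule.colon J (Ideal.span {a ^ j}) ≤ C) :
    ((q - 1 : ℕ) : ℕ∞) * mLength R (R ⧸ C) + mLength R (R ⧸ (J ⊔ Ideal.span {a}))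
      ≤ mLength R (R ⧸ J) := by
  have h := chain_est J C a q hJC haC hcol (q - 1) (by omega)
  rw [Nat.sub_add_cancel hq] at h
  have hGq : J ⊔ Ideal.span {a ^ q} = J :=
    sup_eq_left.mpr ((Ideal.span_singleton_le_iff_mem J).mpr haq)
  rwa [hGq] at h

lemma coord_ge (J C : Ideal R) (a : R) (q : ℕ) (hq : 1 ≤ q) (hJC : J ≤ C) (haC : a ∈ C)
    (haq : a ^ q ∈ J)
    (hcol : ∀ j, 1 ≤ j → j < q → Submodule.colon J (Ideal.span {a ^ j}) ≤ C) :
    (q : ℕ∞) * mLength R (R ⧸ C) ≤ mLength R (R ⧸ J) := by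
  have h := coord_est J C a q hq hJC haC haq hcol
  have hG1 : mLength R (R ⧸ C) ≤ mLength R (R ⧸ (J ⊔ Ideal.span {a})) :=
    lenq_mono (sup_le hJC ((Ideal.span_singleton_le_iff_mem C).mpr haC))
  have hcast : ((q - 1 : ℕ) : ℕ∞) + 1 = (q : ℕ∞) := by
    exact_mod_cast congrArg (Nat.cast : ℕ → ℕ∞) (Nat.sub_add_cancel hq)
  calc (q : ℕ∞) * mLength R (R ⧸ C)
      = ((q - 1 : ℕ) : ℕ∞) * mLength R (R ⧸ C) + mLength R (R ⧸ C) := by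
        rw [← hcast]; ring
    _ ≤ ((q - 1 : ℕ) : ℕ∞) * mLength R (R ⧸ C)
        + mLength R (R ⧸ (J ⊔ Ideal.span {a})) := add_le_add_right hG1 _
    _ ≤ mLength R (R ⧸ J) := h

lemma coord_eq (J C : Ideal R) (a : R) (q : ℕ) (hq : 1 ≤ q) (hJC : J ≤ C) (haC : a ∈ C)
    (haq : a ^ q ∈ J)
    (hcol : ∀ j, 1 ≤ j → j < q → Submodule.colon J (Ideal.span {a ^ j}) ≤ C)
    (hlen : mLength R (R ⧸ J) ≤ (q : ℕ∞) * mLength R (R ⧸ C))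
    (hfin : mLength R (R ⧸ C) ≠ ⊤) :
    C = J ⊔ Ideal.span {a} := by
  have h := coord_est J C a q hq hJC haC haq hcol
  have hcast : ((q - 1 : ℕ) : ℕ∞) + 1 = (q : ℕ∞) := by
    exact_mod_cast congrArg (Nat.cast : ℕ → ℕ∞) (Nat.sub_add_cancel hq)
  have hmulfin : ((q - 1 : ℕ) : ℕ∞) * mLength R (R ⧸ C) ≠ ⊤ :=
    WithTop.mul_ne_top (WithTop.natCast_ne_top _) hfin
  have h2 : ((q - 1 : ℕ) : ℕ∞) * mLength R (R ⧸ C) + mLength R (R ⧸ (J ⊔ Ideal.span {a}))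
      ≤ ((q - 1 : ℕ) : ℕ∞) * mLength R (R ⧸ C) + mLength R (R ⧸ C) := by
    refine le_trans (le_trans h hlen) ?_
    rw [← hcast]
    apply le_of_eq
    ring
  have h3 : mLength R (R ⧸ (J ⊔ Ideal.span {a})) ≤ mLength R (R ⧸ C) :=
    (WithTop.add_le_add_iff_left hmulfin).mp h2
  exact ((eq_of_lenq_le (sup_le hJC ((Ideal.span_singleton_le_iff_mem C).mpr haC)) h3 hfin)).symm

end ColonChain

section Assembly

lemma enat_mul_le_cancel {a b c : ℕ∞} (ha0 : a ≠ 0) (hatop : a ≠ ⊤) (h : a * b ≤ a * c) :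
    b ≤ c := by
  rcases eq_or_ne c ⊤ with rfl | hc
  · exact le_top
  · have hactop : a * c ≠ ⊤ := WithTop.mul_ne_top hatop hc
    have hb : b ≠ ⊤ := by
      rintro rfl
      rw [ENat.mul_top ha0] at h
      exact hactop (top_le_iff.mp h)
    lift a to ℕ using hatop
    lift b to ℕ using hb
    lift c to ℕ using hc
    rw [← Nat.cast_mul, ← Nat.cast_mul, Nat.cast_le] at h
    have ha0' : 0 < a := Nat.pos_of_ne_zero (by simpa using ha0)
    exact_mod_cast Nat.le_of_mul_le_mul_left h ha0'

lemma enat_chain {f : ℕ → ℕ∞} {q d : ℕ} (hq : 1 ≤ q)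
    (hstep : ∀ i < d, (q : ℕ∞) * f i ≤ f (i + 1))
    (htop : f d = (q : ℕ∞) ^ d * f 0) (hfin : f 0 ≠ ⊤) :
    ∀ i ≤ d, f i = (q : ℕ∞) ^ i * f 0 := by
  have hup : ∀ i ≤ d, (q : ℕ∞) ^ i * f 0 ≤ f i := by
    intro i
    induction i with
    | zero => intro _; simp
    | succ n ih =>
      intro hnd
      have h1 : (q : ℕ∞) ^ (n + 1) * f 0 = (q : ℕ∞) * ((q : ℕ∞) ^ n * f 0) := by ring
      rw [h1]
      exact le_trans (mul_le_mul_right (ih (by omega)) _) (hstep n (by omega))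
  have H : ∀ k i, i + k ≤ d → (q : ℕ∞) ^ k * f i ≤ f (i + k) := by
    intro k
    induction k with
    | zero => intro i _; simp
    | succ n ih =>
      intro i hik
      have h1 : (q : ℕ∞) ^ (n + 1) * f i = (q : ℕ∞) ^ n * ((q : ℕ∞) * f i) := by ring
      rw [h1]
      calc (q : ℕ∞) ^ n * ((q : ℕ∞) * f i)
          ≤ (q : ℕ∞) ^ n * f (i + 1) := mul_le_mul_right (hstep i (by omega)) _
        _ ≤ f (i + 1 + n) := ih (i + 1) (by omega)
        _ = f (i + (n + 1)) := by rw [show i + 1 + n = i + (n + 1) from by omega]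
  intro i hi
  have hdw : (q : ℕ∞) ^ (d - i) * f i ≤ f d := by
    have := H (d - i) i (by omega)
    rwa [show i + (d - i) = d from by omega] at this
  have hqtop : ((q : ℕ∞)) ^ (d - i) ≠ ⊤ := by
    rw [← Nat.cast_pow]; exact WithTop.natCast_ne_top _
  have hq0 : ((q : ℕ∞)) ^ (d - i) ≠ 0 :=
    pow_ne_zero _ (Nat.cast_ne_zero.mpr (by omega))
  refine le_antisymm ?_ (hup i hi)
  apply enat_mul_le_cancel hq0 hqtop
  calc (q : ℕ∞) ^ (d - i) * f i ≤ f d := hdw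
    _ = (q : ℕ∞) ^ d * f 0 := htop
    _ = (q : ℕ∞) ^ (d - i) * ((q : ℕ∞) ^ i * f 0) := by
        rw [← mul_assoc, ← pow_add, Nat.sub_add_cancel hi]

lemma assembly {R : Type*} [CommRing R] (c : Ideal R → Ideal R)
    (K : ℕ → Ideal R) (a : ℕ → R) (q d : ℕ) (hq : 1 ≤ q)
    (hJC : ∀ i < d, c (K (i + 1)) ≤ c (K i))
    (haC : ∀ i < d, a i ∈ c (K i))
    (haq : ∀ i < d, a i ^ q ∈ c (K (i + 1)))
    (hcol : ∀ i < d, ∀ j, 1 ≤ j → j < q →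
      Submodule.colon (c (K (i + 1))) (Ideal.span {a i ^ j}) ≤ c (K i))
    (hlen : mLength R (R ⧸ c (K d)) = (q : ℕ∞) ^ d * mLength R (R ⧸ c (K 0)))
    (hfin : mLength R (R ⧸ c (K 0)) ≠ ⊤) :
    ∀ i < d, c (K i) = c (K (i + 1)) ⊔ Ideal.span {a i} := by
  have hf := enat_chain hq
    (fun i hi => coord_ge (c (K (i + 1))) (c (K i)) (a i) q hq (hJC i hi) (haC i hi)
      (haq i hi) (hcol i hi))
    hlen hfin
  intro i hi
  apply coord_eq (c (K (i + 1))) (c (K i)) (a i) q hq (hJC i hi) (haC i hi)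
    (haq i hi) (hcol i hi)
  · rw [hf (i + 1) (by omega), hf i (by omega), pow_succ]
    apply le_of_eq
    ring
  · rw [hf i (by omega)]
    exact WithTop.mul_ne_top (by rw [← Nat.cast_pow]; exact WithTop.natCast_ne_top _) hfin

end Assembly

/-- if `λ(R/c(I^{[q]})) = q^d λ(R/c(I))` for all `q = p^e`, then
`c(I) = I + c(I^{[q]})` for every `q = p^e`, for a parameter ideal `I = (x₁,…,x_d)`. -/
theorem stmt10 (R : Type*) [CommRing R] [IsNoetherianRing R] [IsLocalRing R]
    (p : ℕ) (hp : p.Prime) [CharP R p]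
    (d : ℕ) (x : Fin d → R) (hx : IsSOP R x)
    (c : Ideal R → Ideal R)
    (hext : ∀ I : Ideal R, I ≤ c I) (hmono : Monotone c)
    (hidem : ∀ I : Ideal R, c (c I) = c I)
    (hcc : ∀ (y : Fin d → R), IsSOP R y → ∀ (i : Fin d) (k : Fin d → ℕ) (t s : ℕ),
      0 < t → 0 < s →
      Submodule.colon (c (spow y (Function.update k i (t + s)))) (Ideal.span {y i ^ t})
        ≤ c (spow y (Function.update k i s)))
    (heq : ∀ e : ℕ, mLength R (R ⧸ c (spow x (fun _ => p ^ e)))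
      = (p : ℕ∞) ^ (e * d) * mLength R (R ⧸ c (spow x (fun _ => 1)))) :
    ∀ e : ℕ, c (spow x (fun _ => 1))
      = spow x (fun _ => 1) ⊔ c (spow x (fun _ => p ^ e)) := by
  intro e
  set q : ℕ := p ^ e with hqdef
  have hq1 : 1 ≤ q := Nat.one_le_iff_ne_zero.mpr (pow_ne_zero _ hp.pos.ne')
  have hspow_mono : ∀ k k' : Fin d → ℕ, (∀ j, k j ≤ k' j) → spow x k' ≤ spow x k := by
    intro k k' h
    rw [spow, Ideal.span_le]
    rintro _ ⟨j, rfl⟩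
    have hj : x j ^ k' j = x j ^ k j * x j ^ (k' j - k j) := by
      have := h j
      rw [← pow_add]; congr 1; omega
    show x j ^ k' j ∈ spow x k
    rw [hj]
    exact Ideal.mul_mem_right _ _ (Ideal.subset_span ⟨j, rfl⟩)
  have hK0 : kfun q d 0 = (fun _ => 1 : Fin d → ℕ) := funext fun j => by simp [kfun]
  have hKd : kfun q d d = (fun _ => q : Fin d → ℕ) := funext fun j => by simp [kfun, j.isLt]
  have hsp1 : spow x (fun _ => 1) = Ideal.span (Set.range x) := by
    rw [spow]
    have h1 : (fun i => x i ^ 1) = x := funext fun i => pow_one _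
    rw [h1]
  have hJC : ∀ i < d, c (spow x (kfun q d (i + 1))) ≤ c (spow x (kfun q d i)) := by
    intro i hi
    refine hmono (hspow_mono _ _ ?_)
    intro j
    dsimp [kfun]
    split_ifs <;> omega
  have haC : ∀ i < d, (if h : i < d then x ⟨i, h⟩ else 1) ∈ c (spow x (kfun q d i)) := by
    intro i hi
    rw [dif_pos hi]
    refine hext _ ?_
    have h1 : kfun q d i ⟨i, hi⟩ = 1 := by simp [kfun]
    exact Ideal.subset_span ⟨⟨i, hi⟩, by
      show x ⟨i, hi⟩ ^ kfun q d i ⟨i, hi⟩ = x ⟨i, hi⟩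
      rw [h1, pow_one]⟩
  have haq : ∀ i < d, (if h : i < d then x ⟨i, h⟩ else 1) ^ q ∈ c (spow x (kfun q d (i + 1))) := by
    intro i hi
    rw [dif_pos hi]
    refine hext _ ?_
    have h1 : kfun q d (i + 1) ⟨i, hi⟩ = q := by simp [kfun]
    exact Ideal.subset_span ⟨⟨i, hi⟩, by
      show x ⟨i, hi⟩ ^ kfun q d (i + 1) ⟨i, hi⟩ = x ⟨i, hi⟩ ^ q
      rw [h1]⟩
  have hcol : ∀ i < d, ∀ j, 1 ≤ j → j < q →
      Submodule.colon (c (spow x (kfun q d (i + 1))))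
        (Ideal.span {(if h : i < d then x ⟨i, h⟩ else 1) ^ j}) ≤ c (spow x (kfun q d i)) := by
    intro i hi j hj1 hjq
    rw [dif_pos hi]
    have hupq : Function.update (kfun q d i) ⟨i, hi⟩ (j + (q - j)) = kfun q d (i + 1) := by
      funext j'
      rcases eq_or_ne j' ⟨i, hi⟩ with rfl | hne
      · rw [Function.update_self]
        simp only [kfun]
        rw [if_pos (by omega)]
        omega
      · rw [Function.update_of_ne hne]
        have hv : (j' : ℕ) ≠ i := fun h => hne (Fin.ext h)
        dsimp [kfun]
        split_ifs <;> omega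
    have hcc' := hcc x hx ⟨i, hi⟩ (kfun q d i) j (q - j) (by omega) (by omega)
    rw [hupq] at hcc'
    refine le_trans hcc' (hmono (hspow_mono _ _ ?_))
    intro j'
    rcases eq_or_ne j' ⟨i, hi⟩ with rfl | hne
    · rw [Function.update_self]
      have h1 : kfun q d i ⟨i, hi⟩ = 1 := by simp [kfun]
      rw [h1]
      omega
    · rw [Function.update_of_ne hne]
  have hlen : mLength R (R ⧸ c (spow x (kfun q d d)))
      = (q : ℕ∞) ^ d * mLength R (R ⧸ c (spow x (kfun q d 0))) := by
    rw [hKd, hK0, heq e]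
    congr 1
    rw [hqdef, Nat.cast_pow, ← pow_mul]
  have hfin : mLength R (R ⧸ c (spow x (kfun q d 0))) ≠ ⊤ := by
    rw [hK0]
    refine ne_top_of_le_ne_top ?_ (lenq_mono (hext _))
    apply lenq_ne_top_of_radical
    rw [hsp1, hx.2]
  have hmain : ∀ i < d, c (spow x (kfun q d i)) = c (spow x (kfun q d (i + 1)))
      ⊔ Ideal.span {(if h : i < d then x ⟨i, h⟩ else 1)} :=
    assembly c _ _ q d hq1 hJC haC haq hcol hlen hfin
  have htel : ∀ n, n ≤ d → c (spow x (kfun q d 0))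
      = c (spow x (kfun q d n)) ⊔ Ideal.span (x '' {j : Fin d | (j : ℕ) < n}) := by
    intro n
    induction n with
    | zero =>
      intro _
      have hempty : {j : Fin d | (j : ℕ) < 0} = ∅ := by ext j; simp
      rw [hempty]
      simp
    | succ n ih =>
      intro hnd
      have hn : n < d := by omega
      have himg : x '' {j : Fin d | (j : ℕ) < n + 1}
          = {x ⟨n, hn⟩} ∪ x '' {j : Fin d | (j : ℕ) < n} := by
        ext y
        simp only [Set.mem_image, Set.mem_union, Set.mem_singleton_iff, Set.mem_setOf_eq]
        constructor
        · rintro ⟨j, hj, rfl⟩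
          rcases Nat.lt_succ_iff_lt_or_eq.mp hj with h | h
          · exact Or.inr ⟨j, h, rfl⟩
          · exact Or.inl (congrArg x (show j = ⟨n, hn⟩ from Fin.ext h))
        · rintro (rfl | ⟨j, hj, rfl⟩)
          · exact ⟨⟨n, hn⟩, by simp, rfl⟩
          · exact ⟨j, by omega, rfl⟩
      have hmain' := hmain n hn
      rw [dif_pos hn] at hmain'
      rw [himg, Ideal.span_union, ← sup_assoc, ← hmain']
      exact ih (by omega)
  have hfinal := htel d le_rfl
  have himgd : x '' {j : Fin d | (j : ℕ) < d} = Set.range x := by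
    have huniv : {j : Fin d | (j : ℕ) < d} = Set.univ := by ext j; simp [j.isLt]
    rw [huniv, Set.image_univ]
  rw [hK0, hKd, himgd, ← hsp1] at hfinal
  rw [hfinal, sup_comm]
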